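/- arXiv:2602.02445 — 4 statements merged into one kernel-verified Lean document; each statement's English description precedes it below -/
import Mathlib

section
/- Let $\{x_k\}$ be a non-negative real sequence satisfying $x_{k+1} \le (1 - \lambda \gamma_k) x_k + \alpha_k$ for all $k \ge 1$, where $\gamma_k = c_\gamma k^{-a}$ and $\alpha_k = c_\alpha k^{-b}$ with $0 < a < 1$, $b > a$, $c_\gamma, c_\alpha > 0$, and $\lambda \gamma_1 \in (0,1)$. Then there exists a constant $C > 1/\lambda$ and an index $n_0$ such that $x_n \le C \cdot \alpha_n / \gamma_n$ for all $n \ge n_0$. -/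
/-!
With `u_k = α_k / γ_k = (c_α / c_γ) k^{-(b-a)}` the claim is `x_n ≤ C u_n`, proved by induction
from some `n₁` on. The induction step needs `C (u_k - u_{k+1}) ≤ (λ C - 1) γ_k u_k`; by the mean
value theorem the left side is at most `C (b - a) u_k / k`, so it suffices that
`C (b - a) k^{a-1} ≤ (λ C - 1) c_γ`. For `λ C ≥ 2` this holds as soon as `k^{a-1}` is small,
which is where `a < 1` enters; `C` is then enlarged to cover the base case `x_{n₁}`.
-/

open Real Filter

theorem rpow_neg_sub_rpow_neg_le {p x y : ℝ} (hp : 0 ≤ p) (hx : 0 < x) (hxy : x ≤ y) :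
    x ^ (-p) - y ^ (-p) ≤ p * x ^ (-p - 1) * (y - x) := by
  rcases hxy.eq_or_lt with rfl | hxy
  · simp
  obtain ⟨c, ⟨hxc, hcy⟩, hslope⟩ := exists_hasDerivAt_eq_slope (fun t => t ^ (-p))
    (fun t => -p * t ^ (-p - 1)) hxy
    (fun t ht => (continuousAt_rpow_const t (-p)
      (Or.inl (hx.trans_le ht.1).ne')).continuousWithinAt)
    (fun t ht => hasDerivAt_rpow_const (Or.inl (hx.trans ht.1).ne'))
  have hdecay : c ^ (-p - 1) ≤ x ^ (-p - 1) := rpow_le_rpow_of_nonpos hx hxc.le (by linarith)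
  rw [eq_div_iff (sub_pos.2 hxy).ne'] at hslope
  nlinarith [mul_le_mul_of_nonneg_left hdecay hp, sub_pos.2 hxy]

theorem le_mul_of_le_one_sub_mul_add {x g u : ℕ → ℝ} {lam C : ℝ} {n₀ : ℕ}
    (hrec : ∀ k ≥ n₀, x (k + 1) ≤ (1 - lam * g k) * x k + g k * u k)
    (hg : ∀ k ≥ n₀, lam * g k ≤ 1)
    (hstep : ∀ k ≥ n₀, C * (u k - u (k + 1)) ≤ (lam * C - 1) * g k * u k)
    (hbase : x n₀ ≤ C * u n₀) : ∀ n ≥ n₀, x n ≤ C * u n := by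
  intro n hn
  induction n, hn using Nat.le_induction with
  | base => exact hbase
  | succ k hk ih =>
    calc x (k + 1) ≤ (1 - lam * g k) * x k + g k * u k := hrec k hk
      _ ≤ (1 - lam * g k) * (C * u k) + g k * u k := by
        gcongr
        linarith [hg k hk]
      _ = C * u k - (lam * C - 1) * g k * u k := by ring
      _ ≤ C * u (k + 1) := by linarith [hstep k hk]

theorem mul_rpow_neg_sub_le {a p q c lam C K : ℝ} (hK : 0 < K) (hp : 0 ≤ p) (hq : 0 ≤ q)
    (hc : 0 ≤ c) (hC : 0 ≤ C) (hlamC : 2 ≤ lam * C) (hsmall : p * K ^ (a - 1) ≤ lam * c / 2) :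
    C * (q * K ^ (-p) - q * (K + 1) ^ (-p)) ≤ (lam * C - 1) * (c * K ^ (-a)) * (q * K ^ (-p)) := by
  have hdiff := rpow_neg_sub_rpow_neg_le hp hK (le_add_of_nonneg_right zero_le_one)
  have hsplit : K ^ (-p - 1) = K ^ (a - 1) * (K ^ (-a) * K ^ (-p)) := by
    rw [← rpow_add hK, ← rpow_add hK]; ring_nf
  have hw : 0 ≤ C * q * (K ^ (-a) * K ^ (-p)) := by positivity
  calc C * (q * K ^ (-p) - q * (K + 1) ^ (-p))
      = C * q * (K ^ (-p) - (K + 1) ^ (-p)) := by ring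
    _ ≤ C * q * (p * K ^ (-p - 1) * (K + 1 - K)) := by gcongr
    _ = p * K ^ (a - 1) * (C * q * (K ^ (-a) * K ^ (-p))) := by rw [hsplit]; ring
    _ ≤ lam * c / 2 * (C * q * (K ^ (-a) * K ^ (-p))) := by gcongr
    _ ≤ (lam * C - 1) * (c * K ^ (-a)) * (q * K ^ (-p)) := by
      have : 0 ≤ (lam * C - 2) * c * (q * (K ^ (-a) * K ^ (-p))) := by
        have : 0 ≤ lam * C - 2 := by linarith
        positivity
      nlinarith

theorem mul_rpow_neg_div_mul_rpow_neg {t : ℝ} (ht : 0 < t) (c₁ c₂ a b : ℝ) :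
    c₁ * t ^ (-b) / (c₂ * t ^ (-a)) = c₁ / c₂ * t ^ (-(b - a)) := by
  rw [show -(b - a) = -b - -a by ring, rpow_sub ht]
  field_simp

theorem eventually_mul_natCast_rpow_le {a : ℝ} (ha : a < 1) (p : ℝ) {ε : ℝ} (hε : 0 < ε) :
    ∀ᶠ k : ℕ in atTop, p * (k : ℝ) ^ (a - 1) ≤ ε := by
  have hdecay : Tendsto (fun k : ℕ => p * (k : ℝ) ^ (a - 1)) atTop (nhds 0) := by
    simpa using ((tendsto_rpow_neg_atTop (sub_pos.2 ha)).comp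
      tendsto_natCast_atTop_atTop).const_mul p
  exact hdecay.eventually (ge_mem_nhds hε)

theorem stmt0_general (x γ α : ℕ → ℝ) (a b cγ cα lam : ℝ)
    (hγ : ∀ k, γ k = cγ * (k : ℝ) ^ (-a))
    (hα : ∀ k, α k = cα * (k : ℝ) ^ (-b))
    (ha0 : 0 < a) (ha1 : a < 1) (hab : a < b)
    (hcγ : 0 < cγ) (hcα : 0 < cα)
    (hlam0 : 0 < lam * γ 1) (hlam1 : lam * γ 1 < 1)
    (hrec : ∀ k, 1 ≤ k → x (k + 1) ≤ (1 - lam * γ k) * x k + α k) :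
    ∃ C, 1 / lam < C ∧ ∃ n0 : ℕ, ∀ n, n0 ≤ n → x n ≤ C * α n / γ n := by
  have hγ1 : γ 1 = cγ := by simp [hγ]
  have hlam : 0 < lam := pos_of_mul_pos_left hlam0 (hγ1 ▸ hcγ.le)
  have hu : ∀ k, 1 ≤ k → α k / γ k = cα / cγ * (k : ℝ) ^ (-(b - a)) := fun k hk => by
    rw [hα, hγ, mul_rpow_neg_div_mul_rpow_neg (by exact_mod_cast hk)]
  obtain ⟨n₁, hn₁⟩ := eventually_atTop.1 ((eventually_ge_atTop 1).and
    (eventually_mul_natCast_rpow_le ha1 (b - a) (by positivity : 0 < lam * cγ / 2)))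
  set C := max (2 / lam) (x n₁ / (α n₁ / γ n₁))
  have hC : 2 ≤ lam * C := by rw [← div_le_iff₀' hlam]; exact le_max_left _ _
  refine ⟨C, (div_lt_div_of_pos_right one_lt_two hlam).trans_le (le_max_left _ _), n₁,
    fun n hn => ?_⟩
  rw [mul_div_assoc]
  refine le_mul_of_le_one_sub_mul_add (x := x) (g := γ) (u := fun k => α k / γ k) (lam := lam)
    (fun k hk => ?_) (fun k hk => ?_) (fun k hk => ?_) ?_ n hn
  · have hk1 := (hn₁ k hk).1
    have hγk : 0 < γ k := by rw [hγ]; positivity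
    rw [mul_div_cancel₀ _ hγk.ne']
    exact hrec k hk1
  · have hk1 := (hn₁ k hk).1
    have hγk : γ k ≤ γ 1 := by
      rw [hγ, hγ1]
      exact mul_le_of_le_one_right hcγ.le
        (rpow_le_one_of_one_le_of_nonpos (by exact_mod_cast hk1) (by linarith))
    nlinarith
  · obtain ⟨hk1, hsmall⟩ := hn₁ k hk
    rw [hu k hk1, hu (k + 1) (by omega), hγ k, Nat.cast_succ]
    exact mul_rpow_neg_sub_le (by positivity) (by linarith) (div_pos hcα hcγ).le hcγ.le
      (by positivity) hC hsmall
  · have hn₁1 := (hn₁ n₁ le_rfl).1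
    have hu₁ : 0 < α n₁ / γ n₁ := by rw [hu n₁ hn₁1]; positivity
    exact (div_le_iff₀ hu₁).1 (le_max_right _ _)

/-- Convergence of a stochastic-approximation-type recursion: if a non-negative
sequence satisfies `x_{k+1} ≤ (1 - λ γ_k) x_k + α_k` with power-decay step sizes
`γ_k = c_γ k^{-a}` and perturbations `α_k = c_α k^{-b}`, `0 < a < 1`, `b > a`,
and `λ γ_1 ∈ (0,1)`, then eventually `x_n ≤ C α_n / γ_n` for some `C > 1/λ`. -/
theorem stmt0 (x γ α : ℕ → ℝ) (a b cγ cα lam : ℝ)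
    (hx : ∀ k, 0 ≤ x k)
    (hγ : ∀ k, γ k = cγ * (k : ℝ) ^ (-a))
    (hα : ∀ k, α k = cα * (k : ℝ) ^ (-b))
    (ha0 : 0 < a) (ha1 : a < 1) (hab : a < b)
    (hcγ : 0 < cγ) (hcα : 0 < cα)
    (hlam0 : 0 < lam * γ 1) (hlam1 : lam * γ 1 < 1)
    (hrec : ∀ k, 1 ≤ k → x (k + 1) ≤ (1 - lam * γ k) * x k + α k) :
    ∃ C, 1 / lam < C ∧ ∃ n0 : ℕ, ∀ n, n0 ≤ n → x n ≤ C * α n / γ n :=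
  stmt0_general x γ α a b cγ cα lam hγ hα ha0 ha1 hab hcγ hcα hlam0 hlam1 hrec
end

section
/- Let $\{x_k\}$ be a non-negative real sequence with $x_{k+1} \le (1-\lambda\gamma_k)x_k + \alpha_k$, $\gamma_k = c_\gamma k^{-a}$, $\alpha_k = c_\alpha k^{-b}$, $0 < a < 1$, $b > a$, $\lambda\gamma_1 \in (0,1)$, and suppose for some constant $C$ and index $n$ that $x_n \le C\alpha_n/\gamma_n$. If $(1 - C\lambda)/C \le \gamma_n^{-1}\big(\frac{\alpha_{n+1}/\alpha_n}{\gamma_{n+1}/\gamma_n} - 1\big)$, then $x_{n+1} \le C \alpha_{n+1}/\gamma_{n+1}$. -/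
/-- One-step propagation (induction step) of the bound `x_n ≤ C α_n / γ_n` for a
stochastic-approximation-type recursion `x_{k+1} ≤ (1 - λ γ_k) x_k + α_k` with
`γ_k = c_γ k^{-a}`, `α_k = c_α k^{-b}`, under the verifiable step-size-ratio
condition `(1 - Cλ)/C ≤ γ_n⁻¹ ((α_{n+1}/α_n)/(γ_{n+1}/γ_n) - 1)`. -/
theorem stmt1 (x γ α : ℕ → ℝ) (a b cγ cα lam C : ℝ) (n : ℕ)
    (hx : ∀ k, 0 ≤ x k)
    (hγ : ∀ k, γ k = cγ * (k : ℝ) ^ (-a))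
    (hα : ∀ k, α k = cα * (k : ℝ) ^ (-b))
    (ha0 : 0 < a) (ha1 : a < 1) (hab : a < b)
    (hcγ : 0 < cγ) (hcα : 0 < cα)
    (hlam0 : 0 < lam * γ 1) (hlam1 : lam * γ 1 < 1)
    (hrec : ∀ k, 1 ≤ k → x (k + 1) ≤ (1 - lam * γ k) * x k + α k)
    (hn : 1 ≤ n) (hC : 0 < C)
    (hbase : x n ≤ C * α n / γ n)
    (hcond : (1 - C * lam) / C ≤ (γ n)⁻¹ * ((α (n + 1) / α n) / (γ (n + 1) / γ n) - 1)) :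
    x (n + 1) ≤ C * α (n + 1) / γ (n + 1) := by
  have hn0 : (0:ℝ) < n := by exact_mod_cast hn
  have hn1 : (1:ℝ) ≤ n := by exact_mod_cast hn
  have hn0' : (0:ℝ) < (n:ℝ) + 1 := by linarith
  have hγn : 0 < γ n := by
    rw [hγ]; exact mul_pos hcγ (Real.rpow_pos_of_pos hn0 _)
  have hγn' : 0 < γ (n+1) := by
    rw [hγ]; push_cast; exact mul_pos hcγ (Real.rpow_pos_of_pos hn0' _)
  have hαn : 0 < α n := by
    rw [hα]; exact mul_pos hcα (Real.rpow_pos_of_pos hn0 _)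
  have hαn' : 0 < α (n+1) := by
    rw [hα]; push_cast; exact mul_pos hcα (Real.rpow_pos_of_pos hn0' _)
  have hγ1 : γ 1 = cγ := by rw [hγ]; simp
  have hlam : 0 < lam := by
    rw [hγ1] at hlam0; nlinarith
  have hmono : γ n ≤ γ 1 := by
    rw [hγ, hγ1]
    have : (n:ℝ) ^ (-a) ≤ 1 :=
      Real.rpow_le_one_of_one_le_of_nonpos hn1 (by linarith)
    nlinarith
  have hsmall : lam * γ n < 1 := lt_of_le_of_lt (by nlinarith) hlam1
  have step : x (n+1) ≤ (1 - lam * γ n) * (C * α n / γ n) + α n := by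
    have := hrec n hn
    nlinarith [mul_le_mul_of_nonneg_left hbase (le_of_lt (by linarith : (0:ℝ) < 1 - lam * γ n))]
  refine le_trans step ?_
  have h1 : α (n+1) / α n / (γ (n+1) / γ n) = α (n+1) * γ n / (α n * γ (n+1)) := by
    field_simp
  rw [h1] at hcond
  rw [div_le_iff₀ hC, inv_mul_eq_div, div_mul_eq_mul_div, le_div_iff₀ hγn, sub_mul,
    sub_mul, div_mul_eq_mul_div, sub_le_iff_le_add] at hcond
  have h2 := mul_le_mul_of_nonneg_right hcond (mul_pos hαn hγn').le
  rw [add_mul, sub_mul, div_mul_cancel₀ _ (ne_of_gt (mul_pos hαn hγn'))] at h2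
  rw [show (1 - lam * γ n) * (C * α n / γ n) + α n
      = ((1 - lam * γ n) * (C * α n) + α n * γ n) / γ n from by field_simp,
    div_le_div_iff₀ hγn hγn']
  nlinarith [h2]
end

section
/- Let $\gamma_k = \gamma_1 k^{-a}$ with $a \in (0,1]$. For any integers $1 \le k_m < k_{m+1}$ with $I_m = k_{m+1} - k_m \le k_m$ and $\bar{\gamma}_m = \frac{1}{I_m}\sum_{k=k_m}^{k_{m+1}-1}\gamma_k$, the weights $\alpha_k = \sqrt{\gamma_k / (I_m \bar{\gamma}_m)} - I_m^{-1/2}$ satisfy $\sqrt{\sum_{k=k_m}^{k_{m+1}-1} \alpha_k^2} \le a I_m / k_m$. -/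
/-!
Each `α_k` equals `(√γ_k - √γ̄) / √(I γ̄)`. Since `γ` is decreasing, both `γ_k` and the
mean `γ̄` lie in `[lo, hi] = [γ_{k_{m+1}-1}, γ_{k_m}]`, so `|√γ_k - √γ̄| ≤ √hi - √lo` and
summing the `I` terms gives `√(∑ α_k²) ≤ (√hi - √lo) / √γ̄ ≤ √(hi / lo) - 1`. For the power law,
`hi / lo = ((k_{m+1} - 1) / k_m) ^ a`, and Bernoulli's inequality bounds
`((k_{m+1} - 1) / k_m) ^ (a / 2) - 1` by `a (I - 1) / (2 k_m)`.
-/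

open Finset Real

section NormalizedWeights

variable {ι : Type*} {s : Finset ι} {g : ι → ℝ} {lo hi : ℝ}

lemma le_sum_div_card_of_forall_le (hs : s.Nonempty) (h : ∀ i ∈ s, lo ≤ g i) :
    lo ≤ (∑ i ∈ s, g i) / #s := by
  rw [le_div_iff₀ (mod_cast hs.card_pos), ← nsmul_eq_mul']
  exact card_nsmul_le_sum s g lo h

lemma sum_div_card_le_of_forall_le (hs : s.Nonempty) (h : ∀ i ∈ s, g i ≤ hi) :
    (∑ i ∈ s, g i) / #s ≤ hi := by
  rw [div_le_iff₀ (mod_cast hs.card_pos), ← nsmul_eq_mul']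
  exact sum_le_card_nsmul s g hi h

lemma sqrt_div_mul_sub_one_div_sqrt {n m x : ℝ} (hn : 0 < n) (hm : 0 < m) (hx : 0 ≤ x) :
    √(x / (n * m)) - 1 / √n = (√x - √m) / √(n * m) := by
  rw [sqrt_div hx, sqrt_mul hn.le, sub_div, mul_comm √n,
    div_mul_cancel_left₀ (sqrt_pos.mpr hm).ne', one_div]

theorem sqrt_sum_sq_sqrt_div_card_mul_mean_sub_le (hs : s.Nonempty) (hlo : 0 < lo)
    (hg : ∀ i ∈ s, lo ≤ g i ∧ g i ≤ hi) :
    √(∑ i ∈ s, (√(g i / (#s * ((∑ j ∈ s, g j) / #s))) - 1 / √(#s : ℝ)) ^ 2) ≤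
      √(hi / lo) - 1 := by
  set n : ℝ := (#s : ℝ)
  set m := (∑ j ∈ s, g j) / #s
  have hn : 0 < n := Nat.cast_pos.mpr hs.card_pos
  have hlo_m : lo ≤ m := le_sum_div_card_of_forall_le hs fun i hmem ↦ (hg i hmem).1
  have hm_hi : m ≤ hi := sum_div_card_le_of_forall_le hs fun i hmem ↦ (hg i hmem).2
  have hm : 0 < m := hlo.trans_le hlo_m
  have hterm : ∀ i ∈ s, (√(g i / (n * m)) - 1 / √n) ^ 2 ≤ (√hi - √lo) ^ 2 / (n * m) := by
    intro i hmem
    obtain ⟨hlo_g, hg_hi⟩ := hg i hmem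
    rw [sqrt_div_mul_sub_one_div_sqrt hn hm (hlo.le.trans hlo_g), div_pow,
      sq_sqrt (by positivity)]
    refine div_le_div_of_nonneg_right ?_ (by positivity)
    exact sq_le_sq.mpr <| (abs_sub_le_of_le_of_le (sqrt_le_sqrt hlo_g) (sqrt_le_sqrt hg_hi)
      (sqrt_le_sqrt hlo_m) (sqrt_le_sqrt hm_hi)).trans (le_abs_self _)
  have hsum : ∑ i ∈ s, (√(g i / (n * m)) - 1 / √n) ^ 2 ≤ (√hi - √lo) ^ 2 / lo :=
    calc ∑ i ∈ s, (√(g i / (n * m)) - 1 / √n) ^ 2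
        ≤ #s • ((√hi - √lo) ^ 2 / (n * m)) := sum_le_card_nsmul s _ _ hterm
      _ = (√hi - √lo) ^ 2 / m := by rw [nsmul_eq_mul]; change n * _ = _; field_simp
      _ ≤ (√hi - √lo) ^ 2 / lo := by gcongr
  calc _ ≤ √((√hi - √lo) ^ 2 / lo) := sqrt_le_sqrt hsum
    _ = √(hi / lo) - 1 := by
      rw [sqrt_div' _ hlo.le, sqrt_sq (sub_nonneg.mpr (sqrt_le_sqrt (hlo_m.trans hm_hi))),
        sub_div, div_self (sqrt_pos.mpr hlo).ne', sqrt_div' _ hlo.le]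

end NormalizedWeights

lemma sqrt_rpow_sub_one_le {x a : ℝ} (hx : 0 ≤ x) (ha0 : 0 ≤ a) (ha2 : a ≤ 2) :
    √(x ^ a) - 1 ≤ a / 2 * (x - 1) := by
  have hbernoulli := rpow_one_add_le_one_add_mul_self (s := x - 1) (by linarith)
    (p := a / 2) (by linarith) (by linarith)
  rw [add_sub_cancel] at hbernoulli
  rw [sqrt_eq_rpow, ← rpow_mul hx, mul_one_div]
  linarith

lemma mul_rpow_neg_le_mul_rpow_neg {c a x y : ℝ} (hc : 0 ≤ c) (ha : 0 ≤ a) (hx : 0 < x)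
    (hxy : x ≤ y) : c * y ^ (-a) ≤ c * x ^ (-a) :=
  mul_le_mul_of_nonneg_left (rpow_le_rpow_of_nonpos hx hxy (neg_nonpos.mpr ha)) hc

lemma mul_rpow_neg_div_mul_rpow_neg_s3 {c x y : ℝ} (a : ℝ) (hc : c ≠ 0) (hx : 0 < x) (hy : 0 < y) :
    c * x ^ (-a) / (c * y ^ (-a)) = (y / x) ^ a := by
  rw [rpow_neg hx.le, rpow_neg hy.le, div_rpow hy.le hx.le, mul_div_mul_left _ _ hc,
    inv_div_inv]

theorem stmt3_general (γ : ℕ → ℝ) (γ1 a : ℝ)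
    (hγ : ∀ k, γ k = γ1 * (k : ℝ) ^ (-a))
    (ha0 : 0 < a) (ha1 : a ≤ 1) (hγ1 : 0 < γ1)
    (km kmp1 : ℕ) (hkm : 1 ≤ km) (hlt : km < kmp1)
    (I : ℕ) (hI : I = kmp1 - km)
    (γbar : ℝ) (hγbar : γbar = (∑ k ∈ Finset.Ico km kmp1, γ k) / (I : ℝ))
    (α : ℕ → ℝ)
    (hα : ∀ k, α k = Real.sqrt (γ k / ((I : ℝ) * γbar)) - 1 / Real.sqrt (I : ℝ)) :
    Real.sqrt (∑ k ∈ Finset.Ico km kmp1, (α k) ^ 2) ≤ a * (I : ℝ) / (km : ℝ) := by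
  have hkm_pos : (0 : ℝ) < km := by exact_mod_cast hkm
  have hlast : (km : ℝ) ≤ kmp1 - 1 := by
    rw [le_sub_iff_add_le]; exact_mod_cast hlt
  have hbounds : ∀ k ∈ Ico km kmp1,
      γ1 * ((kmp1 : ℝ) - 1) ^ (-a) ≤ γ k ∧ γ k ≤ γ1 * (km : ℝ) ^ (-a) := by
    intro k hk
    obtain ⟨hkm_k_nat, hk_lt⟩ := mem_Ico.mp hk
    have hk_last : (k : ℝ) ≤ kmp1 - 1 := by
      rw [le_sub_iff_add_le]; exact_mod_cast hk_lt
    have hkm_le_k : (km : ℝ) ≤ k := mod_cast hkm_k_nat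
    rw [hγ]
    exact ⟨mul_rpow_neg_le_mul_rpow_neg hγ1.le ha0.le (hkm_pos.trans_le hkm_le_k) hk_last,
      mul_rpow_neg_le_mul_rpow_neg hγ1.le ha0.le hkm_pos hkm_le_k⟩
  rw [← Nat.card_Ico] at hI
  subst hI hγbar
  simp only [hα]
  calc _ ≤ √(γ1 * (km : ℝ) ^ (-a) / (γ1 * ((kmp1 : ℝ) - 1) ^ (-a))) - 1 :=
        sqrt_sum_sq_sqrt_div_card_mul_mean_sub_le (nonempty_Ico.mpr hlt)
          (by have := hkm_pos.trans_le hlast; positivity) hbounds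
    _ = √((((kmp1 : ℝ) - 1) / km) ^ a) - 1 := by
      rw [mul_rpow_neg_div_mul_rpow_neg_s3 a hγ1.ne' hkm_pos (hkm_pos.trans_le hlast)]
    _ ≤ a / 2 * (((kmp1 : ℝ) - 1) / km - 1) :=
      sqrt_rpow_sub_one_le (div_nonneg (hkm_pos.le.trans hlast) hkm_pos.le) ha0.le (by linarith)
    _ ≤ a * #(Ico km kmp1) / km := by
      rw [Nat.card_Ico, Nat.cast_sub hlt.le, div_sub_one hkm_pos.ne', mul_div_assoc']
      refine div_le_div_of_nonneg_right ?_ hkm_pos.le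
      nlinarith

/-- ℓ₂-discrepancy between normalized weighted and unweighted averaging weights over
a block `[k_m, k_{m+1})` of length `I_m ≤ k_m`, for step sizes `γ_k = γ₁ k^{-a}`:
with `γ̄_m` the block-average step size and
`α_k = √(γ_k / (I_m γ̄_m)) - I_m^{-1/2}`, one has `√(∑ α_k²) ≤ a I_m / k_m`. -/
theorem stmt3 (γ : ℕ → ℝ) (γ1 a : ℝ)
    (hγ : ∀ k, γ k = γ1 * (k : ℝ) ^ (-a))
    (ha0 : 0 < a) (ha1 : a ≤ 1) (hγ1 : 0 < γ1)
    (km kmp1 : ℕ) (hkm : 1 ≤ km) (hlt : km < kmp1)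
    (I : ℕ) (hI : I = kmp1 - km) (hIle : I ≤ km)
    (γbar : ℝ) (hγbar : γbar = (∑ k ∈ Finset.Ico km kmp1, γ k) / (I : ℝ))
    (α : ℕ → ℝ)
    (hα : ∀ k, α k = Real.sqrt (γ k / ((I : ℝ) * γbar)) - 1 / Real.sqrt (I : ℝ)) :
    Real.sqrt (∑ k ∈ Finset.Ico km kmp1, (α k) ^ 2) ≤ a * (I : ℝ) / (km : ℝ) :=
  stmt3_general γ γ1 a hγ ha0 ha1 hγ1 km kmp1 hkm hlt I hI γbar hγbar α hα
end

section
/- Let $\hat{Z}_m = (\cumstep_m)^{-1/2} \sum_{k=k_m}^{k_{m+1}-1} \sqrt{\gamma_k}\, \Gamma^{-1/2} M_k$ and $S_m = I_m^{-1/2} \sum_{k=k_m}^{k_{m+1}-1} \Gamma^{-1/2} M_k$, where $\{M_k\}$ is a martingale difference sequence with Rosenthal constant $\kappa_p$, $\gamma_k = \gamma_1 k^{-a}$, $\cumstep_m = \sum_{k=k_m}^{k_{m+1}-1}\gamma_k$, $I_m = k_{m+1}-k_m \le k_m$. If $Z$ is a standard Gaussian vector and $\mathcal{W}_p(S_m,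 Z) < \infty$, then $\mathcal{W}_p(\hat{Z}_m, Z) \le C_p^{BR} \kappa_p \cdot a I_m / k_m + \mathcal{W}_p(S_m, Z)$. -/
/-!
The difference `Ẑ_m - S_m = ∑ₖ αₖ Γ^{-1/2} Mₖ` has deterministic weights
`αₖ = √(γₖ / Γ̂_m) - 1 / √I_m`, so Burkholder–Rosenthal bounds `‖Ẑ_m - S_m‖_p` by
`C_p^{BR} κ_p √(∑ αₖ²)`, and the coupling `(Ẑ_m, S_m)` glued to any coupling of `S_m` and `Z`
gives `W_p(Ẑ_m, Z) ≤ ‖Ẑ_m - S_m‖_p + W_p(S_m, Z)`. Over the block the `γₖ` differ by a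
factor at most `(k_{m+1} / k_m)^a ≤ 1 + a I_m / k_m` (Bernoulli), which forces
`|αₖ| ≤ (a I_m / k_m) / √I_m` and hence `√(∑ αₖ²) ≤ a I_m / k_m`.
-/

open MeasureTheory ProbabilityTheory Finset
open scoped ENNReal

/-- Euclidean norm of a vector in `ℝ^d`. -/
noncomputable def eucl {d : ℕ} (v : Fin d → ℝ) : ℝ := Real.sqrt (∑ i, v i ^ 2)

/-- Wasserstein-`p` distance (Euclidean cost) between measures on `ℝ^d`,
as an infimum over couplings. -/
noncomputable def Wp {d : ℕ} (p : ℝ) (μ ν : Measure (Fin d → ℝ)) : ℝ≥0∞ :=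
  ⨅ (π : Measure ((Fin d → ℝ) × (Fin d → ℝ)))
    (_ : π.map Prod.fst = μ ∧ π.map Prod.snd = ν),
    (∫⁻ q, ENNReal.ofReal (eucl (q.1 - q.2)) ^ p ∂π) ^ (1 / p)

/-- Standard Gaussian measure on `ℝ^d`. -/
noncomputable def stdGaussian (d : ℕ) : Measure (Fin d → ℝ) :=
  Measure.pi fun _ : Fin d => gaussianReal 0 1

/-- `L^p` norm of a random vector. -/
noncomputable def LpN {d : ℕ} {Ω : Type*} [MeasurableSpace Ω] (μ : Measure Ω)
    (p : ℝ) (f : Ω → Fin d → ℝ) : ℝ≥0∞ :=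
  (∫⁻ ω, ENNReal.ofReal (eucl (f ω)) ^ p ∂μ) ^ (1 / p)

lemma eucl_eq_norm {d : ℕ} (v : Fin d → ℝ) : eucl v = ‖WithLp.toLp 2 v‖ := by
  simp only [eucl, EuclideanSpace.norm_eq, Real.norm_eq_abs, sq_abs]

lemma eucl_add_le {d : ℕ} (v w : Fin d → ℝ) : eucl (v + w) ≤ eucl v + eucl w := by
  simpa only [eucl_eq_norm, WithLp.toLp_add] using norm_add_le _ _

@[fun_prop]
lemma continuous_eucl {d : ℕ} : Continuous (eucl (d := d)) := by
  unfold eucl; fun_prop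

section LpN

variable {d : ℕ} {Ω : Type*} [MeasurableSpace Ω] {μ : Measure Ω} {p : ℝ}

lemma LpN_add_le (hp : 1 ≤ p) {f g : Ω → Fin d → ℝ} (hf : Measurable f) (hg : Measurable g) :
    LpN μ p (f + g) ≤ LpN μ p f + LpN μ p g := by
  calc LpN μ p (f + g)
      ≤ (∫⁻ ω, (ENNReal.ofReal (eucl (f ω)) + ENNReal.ofReal (eucl (g ω))) ^ p ∂μ) ^ (1 / p) := by
        refine ENNReal.rpow_le_rpow (lintegral_mono fun ω => ?_) (by positivity)
        gcongr
        exact (ENNReal.ofReal_le_ofReal (eucl_add_le _ _)).trans ENNReal.ofReal_add_le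
    _ ≤ LpN μ p f + LpN μ p g :=
        ENNReal.lintegral_Lp_add_le (by fun_prop) (by fun_prop) hp

lemma LpN_map {β : Type*} [MeasurableSpace β] {g : Ω → β} (hg : AEMeasurable g μ)
    {f : β → Fin d → ℝ} (hf : Measurable f) :
    LpN (μ.map g) p f = LpN μ p (f ∘ g) := by
  rw [LpN, LpN, lintegral_map' (by fun_prop) hg]
  rfl

end LpN

lemma exists_gluing {α β γ : Type*} [MeasurableSpace α] [MeasurableSpace β]
    [MeasurableSpace γ] [StandardBorelSpace γ] [Nonempty γ]
    (π₁ : Measure (α × β)) (π₂ : Measure (β × γ)) [IsFiniteMeasure π₁] [IsFiniteMeasure π₂]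
    (h : π₁.map Prod.snd = π₂.map Prod.fst) :
    ∃ ρ : Measure ((α × β) × γ),
      ρ.map Prod.fst = π₁ ∧ ρ.map (fun q => (q.1.2, q.2)) = π₂ := by
  set κ := π₂.condKernel.comap Prod.snd measurable_snd
  refine ⟨π₁ ⊗ₘ κ, Measure.fst_compProd π₁ κ, ?_⟩
  have hg : Measurable fun q : (α × β) × γ => (q.1.2, q.2) := by fun_prop
  ext s hs
  calc (π₁ ⊗ₘ κ).map (fun q => (q.1.2, q.2)) s
      = ∫⁻ x, π₂.condKernel x.2 (Prod.mk x.2 ⁻¹' s) ∂π₁ := by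
        rw [Measure.map_apply hg hs, Measure.compProd_apply (hg hs)]
        rfl
    _ = ∫⁻ b, π₂.condKernel b (Prod.mk b ⁻¹' s) ∂π₂.fst := by
        rw [Measure.fst, ← h,
          lintegral_map (Kernel.measurable_kernel_prodMk_left hs) measurable_snd]
    _ = π₂ s := by rw [← Measure.compProd_apply hs, Measure.disintegrate]

section Wasserstein

variable {d : ℕ} {p : ℝ}

lemma Wp_le_LpN {μ ν : Measure (Fin d → ℝ)} (π : Measure ((Fin d → ℝ) × (Fin d → ℝ)))
    (h₁ : π.map Prod.fst = μ) (h₂ : π.map Prod.snd = ν) :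
    Wp p μ ν ≤ LpN π p fun q => q.1 - q.2 :=
  iInf₂_le π ⟨h₁, h₂⟩

lemma Wp_triangle (hp : 1 ≤ p) (μ₁ μ₂ μ₃ : Measure (Fin d → ℝ)) [IsFiniteMeasure μ₂] :
    Wp p μ₁ μ₃ ≤ Wp p μ₁ μ₂ + Wp p μ₂ μ₃ := by
  refine ENNReal.le_iInf₂_add_iInf₂ fun π₁ ⟨h₁, h₂⟩ π₂ ⟨h₂', h₃⟩ => ?_
  have : IsFiniteMeasure π₁ := by
    rw [← Measure.isFiniteMeasure_map_iff measurable_snd.aemeasurable, h₂]; infer_instance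
  have : IsFiniteMeasure π₂ := by
    rw [← Measure.isFiniteMeasure_map_iff measurable_fst.aemeasurable, h₂']; infer_instance
  obtain ⟨ρ, hρ₁, hρ₂⟩ := exists_gluing π₁ π₂ (h₂.trans h₂'.symm)
  have hθ : Measurable fun q : ((Fin d → ℝ) × (Fin d → ℝ)) × (Fin d → ℝ) => (q.1.1, q.2) := by
    fun_prop
  have hθ₁ : (ρ.map fun q => (q.1.1, q.2)).map Prod.fst = μ₁ := by
    rw [Measure.map_map measurable_fst hθ, ← h₁, ← hρ₁,
      Measure.map_map measurable_fst measurable_fst]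
    rfl
  have hθ₃ : (ρ.map fun q => (q.1.1, q.2)).map Prod.snd = μ₃ := by
    rw [Measure.map_map measurable_snd hθ, ← h₃, ← hρ₂,
      Measure.map_map measurable_snd (by fun_prop)]
    rfl
  calc Wp p μ₁ μ₃ ≤ LpN (ρ.map fun q => (q.1.1, q.2)) p (fun q => q.1 - q.2) :=
        Wp_le_LpN _ hθ₁ hθ₃
    _ = LpN ρ p ((fun q => q.1.1 - q.1.2) + fun q => q.1.2 - q.2) := by
        rw [LpN_map hθ.aemeasurable (by fun_prop)]
        congr 1
        ext q : 1
        simp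
    _ ≤ LpN ρ p (fun q => q.1.1 - q.1.2) + LpN ρ p (fun q => q.1.2 - q.2) :=
        LpN_add_le hp (by fun_prop) (by fun_prop)
    _ = LpN π₁ p (fun q => q.1 - q.2) + LpN π₂ p (fun q => q.1 - q.2) := by
        rw [← hρ₁, ← hρ₂, LpN_map measurable_fst.aemeasurable (by fun_prop),
          LpN_map (by fun_prop) (by fun_prop)]
        rfl

lemma Wp_map_le_LpN_sub {Ω : Type*} [MeasurableSpace Ω] (μ : Measure Ω)
    {X Y : Ω → Fin d → ℝ} (hX : Measurable X) (hY : Measurable Y) :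
    Wp p (μ.map X) (μ.map Y) ≤ LpN μ p (X - Y) := by
  have hXY : Measurable fun ω => (X ω, Y ω) := hX.prodMk hY
  refine (Wp_le_LpN (μ.map fun ω => (X ω, Y ω)) ?_ ?_).trans_eq
    (LpN_map hXY.aemeasurable (by fun_prop))
  · rw [Measure.map_map measurable_fst hXY]; rfl
  · rw [Measure.map_map measurable_snd hXY]; rfl

end Wasserstein

lemma abs_sqrt_sub_sqrt_le {x y : ℝ} (hx : 0 ≤ x) (hy : 0 < y) :
    |√x - √y| ≤ |x - y| / √y := by
  rw [le_div_iff₀ (Real.sqrt_pos.2 hy)]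
  calc |√x - √y| * √y ≤ |√x - √y| * (√x + √y) := by
        gcongr; exact le_add_of_nonneg_left (by positivity)
    _ = |x - y| := by
        rw [← abs_of_nonneg (by positivity : 0 ≤ √x + √y), ← abs_mul]
        congr 1
        linear_combination Real.sq_sqrt hx - Real.sq_sqrt hy.le

lemma abs_sqrt_div_sqrt_sub_one_div_sqrt_le {n w W lo hi : ℝ} (hn : 0 < n) (hlo : 0 < lo)
    (hw : lo ≤ w ∧ w ≤ hi) (hW : n * lo ≤ W ∧ W ≤ n * hi) :
    |√w / √W - 1 / √n| ≤ (hi / lo - 1) / √n := by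
  have hWpos : 0 < W := lt_of_lt_of_le (by positivity) hW.1
  have hsn : 0 < √n := Real.sqrt_pos.2 hn
  have hsW : 0 < √W := Real.sqrt_pos.2 hWpos
  have hsplit : √w / √W - 1 / √n = (√(n * w) - √W) / (√n * √W) := by
    rw [Real.sqrt_mul hn.le]; field_simp
  have hnum : |n * w - W| ≤ n * (hi - lo) := by
    rw [abs_le]; constructor <;> nlinarith
  calc |√w / √W - 1 / √n| = |√(n * w) - √W| / (√n * √W) := by
        rw [hsplit, abs_div, abs_of_pos (by positivity : 0 < √n * √W)]
    _ ≤ |n * w - W| / √W / (√n * √W) := by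
        gcongr; exact abs_sqrt_sub_sqrt_le (by nlinarith) hWpos
    _ = |n * w - W| / (W * √n) := by
        rw [div_div, mul_comm √n, ← mul_assoc, Real.mul_self_sqrt hWpos.le]
    _ ≤ n * (hi - lo) / (n * lo * √n) := by
        gcongr
        · exact (abs_nonneg _).trans hnum
        · exact hW.1
    _ = (hi / lo - 1) / √n := by field_simp

lemma sqrt_sum_sq_sqrt_div_sqrt_sum_sub_le {ι : Type*} {s : Finset ι} (hs : s.Nonempty)
    {w : ι → ℝ} {lo hi : ℝ} (hlo : 0 < lo) (hw : ∀ k ∈ s, lo ≤ w k ∧ w k ≤ hi) :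
    √(∑ k ∈ s, (√(w k) / √(∑ j ∈ s, w j) - 1 / √(#s : ℝ)) ^ 2) ≤ hi / lo - 1 := by
  have hn : (0 : ℝ) < #s := by exact_mod_cast hs.card_pos
  have hW : #s * lo ≤ ∑ j ∈ s, w j ∧ ∑ j ∈ s, w j ≤ #s * hi :=
    ⟨by simpa using card_nsmul_le_sum s w lo fun k hk => (hw k hk).1,
      by simpa using sum_le_card_nsmul s w hi fun k hk => (hw k hk).2⟩
  have hB : 0 ≤ hi / lo - 1 := by
    obtain ⟨k, hk⟩ := hs
    rw [sub_nonneg, one_le_div hlo]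
    exact (hw k hk).1.trans (hw k hk).2
  have hterm : ∀ k ∈ s, (√(w k) / √(∑ j ∈ s, w j) - 1 / √(#s : ℝ)) ^ 2
      ≤ ((hi / lo - 1) / √(#s : ℝ)) ^ 2 := fun k hk =>
    (sq_abs _).symm.trans_le <| pow_le_pow_left₀ (abs_nonneg _)
      (abs_sqrt_div_sqrt_sub_one_div_sqrt_le hn hlo (hw k hk) hW) 2
  calc √(∑ k ∈ s, (√(w k) / √(∑ j ∈ s, w j) - 1 / √(#s : ℝ)) ^ 2)
      ≤ √(#s * ((hi / lo - 1) / √(#s : ℝ)) ^ 2) := by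
        gcongr
        simpa using sum_le_card_nsmul s _ _ hterm
    _ = hi / lo - 1 := by
        rw [div_pow, Real.sq_sqrt hn.le, mul_div_cancel₀ _ hn.ne', Real.sqrt_sq hB]

lemma sqrt_sum_sq_stepSize_weights_sub_le {γ : ℕ → ℝ} {γ1 a : ℝ}
    (hγ : ∀ k, γ k = γ1 * (k : ℝ) ^ (-a)) (hγ1 : 0 < γ1) (ha0 : 0 ≤ a) (ha1 : a ≤ 1)
    {km kmp1 : ℕ} (hkm : 1 ≤ km) (hlt : km < kmp1) :
    √(∑ k ∈ Ico km kmp1, (√(γ k) / √(∑ j ∈ Ico km kmp1, γ j)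
        - 1 / √((kmp1 - km : ℕ) : ℝ)) ^ 2) ≤ a * ((kmp1 - km : ℕ) : ℝ) / km := by
  have hkmR : (0 : ℝ) < km := by exact_mod_cast hkm
  have hkmp1R : (km : ℝ) < kmp1 := by exact_mod_cast hlt
  have hkmp1pos : (0 : ℝ) < kmp1 := hkmR.trans hkmp1R
  have hbounds : ∀ k ∈ Ico km kmp1,
      γ1 * (kmp1 : ℝ) ^ (-a) ≤ γ k ∧ γ k ≤ γ1 * (km : ℝ) ^ (-a) := by
    intro k hk
    obtain ⟨hk₁, hk₂⟩ := mem_Ico.1 hk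
    rw [hγ]
    constructor <;> gcongr ?_ * ?_
    · exact Real.rpow_le_rpow_of_nonpos (hkmR.trans_le (by exact_mod_cast hk₁))
        (by exact_mod_cast hk₂.le) (by linarith)
    · exact Real.rpow_le_rpow_of_nonpos hkmR (by exact_mod_cast hk₁) (by linarith)
  have hratio :
      γ1 * (km : ℝ) ^ (-a) / (γ1 * (kmp1 : ℝ) ^ (-a)) = (1 + (kmp1 - km) / km) ^ a := by
    rw [mul_div_mul_left _ _ hγ1.ne', Real.rpow_neg hkmR.le, Real.rpow_neg hkmp1pos.le,
      inv_div_inv, ← Real.div_rpow hkmp1pos.le hkmR.le]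
    field_simp
    ring_nf
  have hbernoulli := rpow_one_add_le_one_add_mul_self
    (by rw [le_div_iff₀ hkmR]; linarith : -1 ≤ ((kmp1 : ℝ) - km) / km) ha0 ha1
  have hspread := sqrt_sum_sq_sqrt_div_sqrt_sum_sub_le (nonempty_Ico.2 hlt) (by positivity) hbounds
  rw [Nat.card_Ico, hratio] at hspread
  rw [Nat.cast_sub hlt.le] at hspread ⊢
  rw [mul_div_assoc]
  linarith

theorem stmt5_general (d : ℕ) {Ω : Type*} {m0 : MeasurableSpace Ω}
    (μ : Measure Ω) [IsProbabilityMeasure μ]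
    (N : ℕ → Ω → Fin d → ℝ)   -- `N k = Γ^{-1/2} M_k`
    (hmeas : ∀ k, Measurable (N k))
    (p : ℝ) (hp : 1 ≤ p)
    (CBR κ : ℝ) (hCBR : 0 < CBR) (hκ : 0 < κ)
    (hBR : ∀ (β : ℕ → ℝ) (j l : ℕ),
      LpN μ p (fun ω => ∑ k ∈ Finset.Ico j l, β k • N k ω)
        ≤ ENNReal.ofReal (CBR * κ * Real.sqrt (∑ k ∈ Finset.Ico j l, β k ^ 2)))
    (γ : ℕ → ℝ) (γ1 a : ℝ)
    (hγ : ∀ k, γ k = γ1 * (k : ℝ) ^ (-a))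
    (ha0 : 0 < a) (ha1 : a ≤ 1) (hγ1 : 0 < γ1)
    (km kmp1 : ℕ) (hkm : 1 ≤ km) (hlt : km < kmp1)
    (I : ℕ) (hI : I = kmp1 - km)
    (cumstep : ℝ) (hcum : cumstep = ∑ k ∈ Finset.Ico km kmp1, γ k)
    (Zhat S : Ω → Fin d → ℝ)
    (hZhat : ∀ ω, Zhat ω =
      (1 / Real.sqrt cumstep) • ∑ k ∈ Finset.Ico km kmp1, Real.sqrt (γ k) • N k ω)
    (hS : ∀ ω, S ω = (1 / Real.sqrt (I : ℝ)) • ∑ k ∈ Finset.Ico km kmp1, N k ω) :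
    Wp p (μ.map Zhat) (stdGaussian d)
      ≤ ENNReal.ofReal (CBR * κ * (a * (I : ℝ) / (km : ℝ)))
        + Wp p (μ.map S) (stdGaussian d) := by
  subst hI hcum
  have hZm : Measurable Zhat := by rw [funext hZhat]; fun_prop
  have hSm : Measurable S := by rw [funext hS]; fun_prop
  have hdiff : Zhat - S = fun ω => ∑ k ∈ Ico km kmp1,
      (√(γ k) / √(∑ j ∈ Ico km kmp1, γ j) - 1 / √((kmp1 - km : ℕ) : ℝ)) • N k ω := by
    ext1 ω
    rw [Pi.sub_apply, hZhat, hS, smul_sum, smul_sum, ← sum_sub_distrib]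
    refine sum_congr rfl fun k _ => ?_
    rw [smul_smul, ← sub_smul, div_mul_eq_mul_div, one_mul]
  calc Wp p (μ.map Zhat) (stdGaussian d)
      ≤ Wp p (μ.map Zhat) (μ.map S) + Wp p (μ.map S) (stdGaussian d) := Wp_triangle hp _ _ _
    _ ≤ LpN μ p (Zhat - S) + Wp p (μ.map S) (stdGaussian d) := by
        gcongr
        exact Wp_map_le_LpN_sub μ hZm hSm
    _ ≤ ENNReal.ofReal (CBR * κ * (a * ((kmp1 - km : ℕ) : ℝ) / km))
          + Wp p (μ.map S) (stdGaussian d) := by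
        gcongr
        rw [hdiff]
        refine (hBR _ km kmp1).trans (ENNReal.ofReal_le_ofReal ?_)
        gcongr
        exact sqrt_sum_sq_stepSize_weights_sub_le hγ hγ1 ha0.le ha1 hkm hlt

/-- Wasserstein-`p` CLT transfer from the unweighted block sum
`S_m = I_m^{-1/2} ∑ Γ^{-1/2} M_k` to the step-size-weighted block sum
`Ẑ_m = Γ̂_m^{-1/2} ∑ √γ_k Γ^{-1/2} M_k`: if `{Γ^{-1/2} M_k}` is a martingale
difference sequence with Burkholder–Rosenthal constant `C_p^{BR} κ_p`, `γ_k = γ₁ k^{-a}`,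
and `W_p(S_m, Z) < ∞` for a standard Gaussian `Z`, then
`W_p(Ẑ_m, Z) ≤ C_p^{BR} κ_p · a I_m / k_m + W_p(S_m, Z)`. -/
theorem stmt5 (d : ℕ) {Ω : Type*} {m0 : MeasurableSpace Ω}
    (μ : Measure Ω) [IsProbabilityMeasure μ]
    (ℱ : Filtration ℕ m0)
    (N : ℕ → Ω → Fin d → ℝ)   -- `N k = Γ^{-1/2} M_k`
    (hadapted : ∀ k, StronglyMeasurable[ℱ k] (N k))
    (hmeas : ∀ k, Measurable (N k))
    (hmds : ∀ k, μ[N (k + 1) | ℱ k] =ᵐ[μ] 0)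
    (p : ℝ) (hp : 1 ≤ p)
    (CBR κ : ℝ) (hCBR : 0 < CBR) (hκ : 0 < κ)
    (hBR : ∀ (β : ℕ → ℝ) (j l : ℕ),
      LpN μ p (fun ω => ∑ k ∈ Finset.Ico j l, β k • N k ω)
        ≤ ENNReal.ofReal (CBR * κ * Real.sqrt (∑ k ∈ Finset.Ico j l, β k ^ 2)))
    (γ : ℕ → ℝ) (γ1 a : ℝ)
    (hγ : ∀ k, γ k = γ1 * (k : ℝ) ^ (-a))
    (ha0 : 0 < a) (ha1 : a ≤ 1) (hγ1 : 0 < γ1)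
    (km kmp1 : ℕ) (hkm : 1 ≤ km) (hlt : km < kmp1)
    (I : ℕ) (hI : I = kmp1 - km) (hIle : I ≤ km)
    (cumstep : ℝ) (hcum : cumstep = ∑ k ∈ Finset.Ico km kmp1, γ k)
    (Zhat S : Ω → Fin d → ℝ)
    (hZhat : ∀ ω, Zhat ω =
      (1 / Real.sqrt cumstep) • ∑ k ∈ Finset.Ico km kmp1, Real.sqrt (γ k) • N k ω)
    (hS : ∀ ω, S ω = (1 / Real.sqrt (I : ℝ)) • ∑ k ∈ Finset.Ico km kmp1, N k ω)
    (hfin : Wp p (μ.map S) (stdGaussian d) ≠ ⊤) :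
    Wp p (μ.map Zhat) (stdGaussian d)
      ≤ ENNReal.ofReal (CBR * κ * (a * (I : ℝ) / (km : ℝ)))
        + Wp p (μ.map S) (stdGaussian d) :=
  stmt5_general d (m0 := m0) μ N hmeas p hp CBR κ hCBR hκ hBR γ γ1 a hγ ha0 ha1 hγ1 km kmp1 hkm hlt
    I hI cumstep hcum Zhat S hZhat hS
end
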